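/- Let A ∈ GL₂ℤ. The group G_A = ℤ² ⋊_A ℤ is generated by two elements if and only if there exists a vector v ∈ ℤ² such that ℤv + ℤ(Av) = ℤ². -/

import Mathlib

/-!
A generating pair of `G_A` can be Nielsen-reduced, by Euclid's algorithm on the `ℤ`-coordinates,
to a pair `x, y` with `y = (w, 0)`. By Cayley–Hamilton `A² = (tr A) A - (det A)` with
`det A = ±1`, so `S = ℤw + ℤAw` is invariant under `A` and `A⁻¹`; hence `S × {0}` is normal and
`G_A = ⟨x⟩ (S × {0})`. Since the `ℤ`-coordinate of `x` is nonzero, every `(u, 0)` lies in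
`S × {0}`, i.e. `S = ℤ²`. Conversely, if `ℤv + ℤAv = ℤ²` then `(v, 0)` and `(0, 1)` generate,
because conjugating `(v, 0)` by `(0, 1)` gives `(Av, 0)`.
-/

open Matrix

abbrev GL2Z := GL (Fin 2) ℤ

/-- The automorphism of `ℤ²` induced by `A ∈ GL₂ℤ`. -/
def glToAddAut (A : GL2Z) : (Fin 2 → ℤ) ≃+ (Fin 2 → ℤ) :=
  (Matrix.GeneralLinearGroup.toLin A).toLinearEquiv.toAddEquiv

/-- The action of `ℤ` on `ℤ²` with `1` acting as `A`. -/
def phiA (A : GL2Z) : Multiplicative ℤ →* MulAut (Multiplicative (Fin 2 → ℤ)) :=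
  zpowersHom _ (AddEquiv.toMultiplicative (glToAddAut A))

/-- `G_A = ℤ² ⋊_A ℤ`. -/
abbrev GA (A : GL2Z) := (Multiplicative (Fin 2 → ℤ)) ⋊[phiA A] (Multiplicative ℤ)

open Subgroup SemidirectProduct
open Multiplicative (ofAdd toAdd)
open scoped Pointwise

theorem Subgroup.closure_pair_mul_zpow {G : Type*} [Group G] (x y : G) (k : ℤ) :
    closure {x * y ^ k, y} = closure ({x, y} : Set G) := by
  apply le_antisymm <;> rw [closure_le, Set.insert_subset_iff, Set.singleton_subset_iff]
  · exact ⟨mul_mem (subset_closure (by simp)) (zpow_mem (subset_closure (by simp : y ∈ _)) k),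
      subset_closure (by simp)⟩
  · refine ⟨?_, subset_closure (by simp)⟩
    simpa using mul_mem (subset_closure (Set.mem_insert (x * y ^ k) {y}))
      (zpow_mem (subset_closure (by simp : y ∈ _)) (-k))

/-- Euclid's algorithm on the images `f x, f y ∈ ℤ`, run by the Nielsen moves
`(x, y) ↦ (y, x * y ^ (-q))`. -/
theorem Subgroup.exists_closure_pair_eq_top_map_eq_one {G : Type*} [Group G]
    (f : G →* Multiplicative ℤ) {x y : G} (h : closure {x, y} = ⊤) :
    ∃ x' y' : G, closure {x', y'} = ⊤ ∧ f y' = 1 := by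
  induction hn : (toAdd (f y)).natAbs using Nat.strong_induction_on generalizing x y with
  | _ n ih =>
    by_cases hy : f y = 1
    · exact ⟨x, y, h, hy⟩
    have hy0 : toAdd (f y) ≠ 0 := hy
    set q := toAdd (f x) / toAdd (f y)
    refine ih _ ?_ (x := y) (y := x * y ^ (-q)) ?_ rfl
    · have hr : toAdd (f (x * y ^ (-q))) = toAdd (f x) % toAdd (f y) := by
        simp only [map_mul, map_zpow, toAdd_mul, toAdd_zpow, smul_eq_mul, Int.emod_def, q]
        ring
      have hlt := Int.emod_lt_abs (toAdd (f x)) hy0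
      have := Int.emod_nonneg (toAdd (f x)) hy0
      rw [Int.abs_eq_natAbs] at hlt
      omega
    · rw [Set.pair_comm, closure_pair_mul_zpow, h]

theorem Matrix.mulVec_mulVec_self_fin_two {R : Type*} [CommRing R]
    (B : Matrix (Fin 2) (Fin 2) R) (u : Fin 2 → R) :
    B *ᵥ (B *ᵥ u) = B.trace • B *ᵥ u - B.det • u := by
  ext i
  fin_cases i <;> simp [mulVec, dotProduct, Fin.sum_univ_two, trace_fin_two, det_fin_two] <;> ring

theorem Submodule.apply_mem_span_pair_iff {R M : Type*} [CommRing R] [AddCommGroup M]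
    [Module R M] {f : M →ₗ[R] M} {t d : R} (hd : IsUnit d) (hf : ∀ u, f (f u) = t • f u - d • u)
    (w u : M) : f u ∈ span R {w, f w} ↔ u ∈ span R {w, f w} := by
  set S := span R {w, f w}
  have hmaps : ∀ u ∈ S, f u ∈ S := by
    have : S.map f ≤ S := by
      rw [Submodule.map_span_le]
      rintro _ (rfl | rfl)
      · exact subset_span (by simp)
      · rw [hf]
        exact sub_mem (smul_mem _ _ (subset_span (by simp))) (smul_mem _ _ (subset_span (by simp)))
    exact fun u hu => this (Submodule.mem_map_of_mem hu)
  refine ⟨fun hfu => ?_, hmaps u⟩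
  have hdu : d • u = t • f u - f (f u) := by rw [hf]; abel
  rw [← S.smul_mem_iff_of_isUnit hd, hdu]
  exact sub_mem (smul_mem _ _ hfu) (hmaps _ hfu)

theorem Matrix.mulVec_mem_span_pair_iff {R : Type*} [CommRing R] {B : Matrix (Fin 2) (Fin 2) R}
    (hB : IsUnit B.det) (w u : Fin 2 → R) :
    B *ᵥ u ∈ Submodule.span R {w, B *ᵥ w} ↔ u ∈ Submodule.span R {w, B *ᵥ w} :=
  Submodule.apply_mem_span_pair_iff (f := B.mulVecLin) hB B.mulVec_mulVec_self_fin_two w u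

theorem SemidirectProduct.map_inl_normal {N G : Type*} [Group N] [Group G] {φ : G →* MulAut N}
    (K : Subgroup N) [hK : K.Normal]
    (hφ : ∀ g, φ g ∈ MulAction.stabilizer (MulAut N) (K : Set N)) :
    (K.map (inl : N →* N ⋊[φ] G)).Normal where
  conj_mem := by
    rintro _ ⟨n, hn, rfl⟩ g
    refine ⟨g.left * φ g.right n * g.left⁻¹,
      hK.conj_mem _ ((MulAction.mem_stabilizer_set.mp (hφ _) n).mpr hn) _, ?_⟩
    ext <;> simp

theorem Subgroup.ker_le_of_zpowers_sup_eq_top {G H : Type*} [Group G] [Group H]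
    [IsMulTorsionFree H] (f : G →* H) {N : Subgroup G} [N.Normal] (hN : N ≤ f.ker) {x : G}
    (hx : f x ≠ 1) (h : zpowers x ⊔ N = ⊤) : f.ker ≤ N := by
  intro g hg
  have hg' : g ∈ ((zpowers x ⊔ N : Subgroup G) : Set G) := by simp [h]
  rw [mul_normal] at hg'
  obtain ⟨_, ⟨k, rfl⟩, n, hn, rfl⟩ := hg'
  have hk : k = 0 := by
    rw [MonoidHom.mem_ker, map_mul, map_zpow, hN hn, mul_one] at hg
    exact (IsMulTorsionFree.zpow_eq_one_iff_right hx).mp hg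
  simpa [hk] using hn

namespace GA

variable (A : GL2Z)

theorem conj_inl_eq_inl_mulVec (v : Fin 2 → ℤ) :
    (inr (ofAdd (1 : ℤ)) * inl (ofAdd v) * (inr (ofAdd 1))⁻¹ : GA A) =
      inl (ofAdd ((A : Matrix (Fin 2) (Fin 2) ℤ).mulVec v)) := by
  rw [← map_inv, ← inl_aut]
  simp only [phiA, zpowersHom_apply, toAdd_ofAdd, zpow_one]
  rfl

theorem closure_inl_inr_eq_top {v : Fin 2 → ℤ}
    (hv : Submodule.span ℤ {v, (A : Matrix (Fin 2) (Fin 2) ℤ).mulVec v} = ⊤) :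
    closure {inl (ofAdd v), inr (ofAdd (1 : ℤ))} = (⊤ : Subgroup (GA A)) := by
  set H := closure {inl (ofAdd v), inr (ofAdd (1 : ℤ))}
  have hinr : ∀ k : ℤ, (inr (ofAdd k) : GA A) ∈ H := fun k => by
    simpa [← map_zpow, ← ofAdd_zsmul] using zpow_mem (subset_closure (by simp) :
      (inr (ofAdd (1 : ℤ)) : GA A) ∈ H) k
  have hinl : ∀ u, (inl (ofAdd u) : GA A) ∈ H := fun u => by
    induction hv ▸ Submodule.mem_top (x := u) using Submodule.span_induction with
    | mem u hu =>
      rcases hu with rfl | rfl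
      · exact subset_closure (by simp)
      · rw [← conj_inl_eq_inl_mulVec]
        exact mul_mem (mul_mem (hinr 1) (subset_closure (by simp))) (inv_mem (hinr 1))
    | zero => exact one_mem H
    | add u u' _ _ hu hu' => simpa using mul_mem hu hu'
    | smul c u _ hu =>
      rw [ofAdd_zsmul, map_zpow]
      exact zpow_mem hu c
  rw [eq_top_iff]
  rintro g -
  rw [← inl_left_mul_inr_right g]
  exact mul_mem (hinl _) (hinr _)

theorem phiA_mem_stabilizer {S : Submodule ℤ (Fin 2 → ℤ)}
    (hS : ∀ u, (A : Matrix (Fin 2) (Fin 2) ℤ).mulVec u ∈ S ↔ u ∈ S) (g : Multiplicative ℤ) :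
    phiA A g ∈ MulAction.stabilizer _
      (S.toAddSubgroup.toSubgroup : Set (Multiplicative (Fin 2 → ℤ))) := by
  rw [phiA, zpowersHom_apply]
  exact zpow_mem (MulAction.mem_stabilizer_set.mpr fun b => hS (toAdd b)) _

theorem span_eq_top_of_closure_eq_top {x y : GA A} (hy : rightHom y = 1)
    (h : closure {x, y} = ⊤) :
    Submodule.span ℤ {toAdd y.left, (A : Matrix (Fin 2) (Fin 2) ℤ).mulVec (toAdd y.left)} = ⊤ := by
  set S := Submodule.span ℤ {toAdd y.left, (A : Matrix (Fin 2) (Fin 2) ℤ).mulVec (toAdd y.left)}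
  set M := (S.toAddSubgroup.toSubgroup).map (inl : _ →* GA A)
  have hM : M.Normal := map_inl_normal _ (phiA_mem_stabilizer A
    (Matrix.mulVec_mem_span_pair_iff ((Matrix.isUnit_iff_isUnit_det _).mp A.isUnit) _))
  have hsup : zpowers x ⊔ M = ⊤ := by
    rw [eq_top_iff, ← h, closure_le, Set.insert_subset_iff, Set.singleton_subset_iff]
    refine ⟨le_sup_left (b := M) (mem_zpowers x), le_sup_right (a := zpowers x) ⟨y.left, ?_, ?_⟩⟩
    · exact (Multiplicative.mem_toSubgroup _ _).mpr (Submodule.subset_span (Set.mem_insert _ _))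
    · ext
      · rfl
      · exact hy.symm
  have hx : rightHom x ≠ 1 := by
    intro hx
    have : closure {x, y} ≤ rightHom.ker := by
      rw [closure_le, Set.insert_subset_iff, Set.singleton_subset_iff]
      exact ⟨hx, hy⟩
    rw [h] at this
    exact absurd (this (mem_top (inr (ofAdd 1)))) (by simp)
  have hMker : M ≤ rightHom.ker := by
    rintro _ ⟨s, -, rfl⟩
    exact rightHom_inl s
  rw [eq_top_iff]
  rintro u -
  obtain ⟨s, hs, he⟩ := ker_le_of_zpowers_sup_eq_top rightHom hMker hx hsup (rightHom_inl (ofAdd u))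
  rwa [inl_inj.mp he] at hs

end GA

theorem GA_two_generated_iff (A : GL2Z) :
    (∃ x y : GA A, Subgroup.closure ({x, y} : Set (GA A)) = ⊤) ↔
    (∃ v : Fin 2 → ℤ,
      Submodule.span ℤ ({v, (A : Matrix (Fin 2) (Fin 2) ℤ).mulVec v} : Set (Fin 2 → ℤ)) = ⊤) := by
  constructor
  · rintro ⟨x, y, h⟩
    obtain ⟨x', y', h', hy'⟩ := exists_closure_pair_eq_top_map_eq_one rightHom h
    exact ⟨_, GA.span_eq_top_of_closure_eq_top A hy' h'⟩
  · rintro ⟨v, hv⟩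
    exact ⟨_, _, GA.closure_inl_inr_eq_top A hv⟩
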